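/- arXiv:2307.04912 — 10 statements merged into one kernel-verified Lean document; each statement's English description precedes it below -/
import Mathlib

section
/- For every nonzero rational number x, if ν_p(x) ∈ {1, 2, ..., p-1}, then applying the arithmetic partial derivative D_p exactly ν_p(x)+1 times to x yields 0. -/
/-- Arithmetic partial derivative with respect to the prime `p`. -/
noncomputable def Dp (p : ℕ) (x : ℚ) : ℚ :=
  if x = 0 then 0 else x * (padicValRat p x : ℚ) / p

/-!
Write `v = ν_p(x)`. Since `D_p x = x · v / p`, the valuation drops by one, `ν_p(D_p x) = v - 1`,
as long as `p ∤ v`; this holds for `v = 1, …, p - 1`. Starting from `v ≤ p - 1` the valuation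
therefore runs down to `0` in `v` steps, and one more application of `D_p` gives `0`.
-/

namespace Dp

variable {p : ℕ} {x : ℚ}

theorem of_ne_zero (hx : x ≠ 0) : Dp p x = x * padicValRat p x / p := if_neg hx

theorem eq_zero_of_padicValRat_eq_zero (h : padicValRat p x = 0) : Dp p x = 0 := by
  by_cases hx : x = 0
  · simp [Dp, hx]
  · simp [of_ne_zero hx, h]

theorem padicValRat_eq [Fact p.Prime] (hv : padicValRat p x ≠ 0) :
    padicValRat p (Dp p x) = padicValRat p x - 1 + padicValInt p (padicValRat p x) := by
  have hx : x ≠ 0 := by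
    rintro rfl
    exact hv padicValRat.zero
  have hv' : (padicValRat p x : ℚ) ≠ 0 := by exact_mod_cast hv
  have hp : (p : ℚ) ≠ 0 := by exact_mod_cast (Fact.out : p.Prime).ne_zero
  rw [of_ne_zero hx, padicValRat.div (mul_ne_zero hx hv') hp, padicValRat.mul hx hv',
    padicValRat.of_int, padicValRat.self (Fact.out : p.Prime).one_lt]
  ring

theorem padicValRat_eq_sub_one_of_not_dvd [Fact p.Prime] (hv : ¬ (p : ℤ) ∣ padicValRat p x) :
    padicValRat p (Dp p x) = padicValRat p x - 1 := by
  have hv0 : padicValRat p x ≠ 0 := by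
    rintro h
    exact hv (h ▸ dvd_zero _)
  rw [padicValRat_eq hv0, padicValInt.eq_zero_of_not_dvd hv, Nat.cast_zero, add_zero]

theorem iterate_eq_zero_of_padicValRat_eq [Fact p.Prime] {n : ℕ} (hn : n < p)
    (hx : padicValRat p x = n) : (Dp p)^[n + 1] x = 0 := by
  induction n generalizing x with
  | zero => exact eq_zero_of_padicValRat_eq_zero (by simpa using hx)
  | succ n ih =>
    have hndvd : ¬ (p : ℤ) ∣ padicValRat p x := by
      rw [hx, Int.natCast_dvd_natCast]
      exact fun hdvd => (Nat.le_of_dvd n.succ_pos hdvd).not_gt hn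
    rw [Function.iterate_succ_apply]
    refine ih (by omega) ?_
    rw [padicValRat_eq_sub_one_of_not_dvd hndvd, hx]
    push_cast
    ring

end Dp

theorem dp_iter_eventually_zero_general (p : ℕ) (hp : p.Prime) (x : ℚ)
    (h1 : 1 ≤ padicValRat p x) (h2 : padicValRat p x ≤ (p : ℤ) - 1) :
    (Dp p)^[(padicValRat p x).toNat + 1] x = 0 := by
  have : Fact p.Prime := ⟨hp⟩
  have hv : padicValRat p x = ((padicValRat p x).toNat : ℤ) :=
    (Int.toNat_of_nonneg (by omega)).symm
  exact Dp.iterate_eq_zero_of_padicValRat_eq (by omega) hv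

theorem dp_iter_eventually_zero (p : ℕ) (hp : p.Prime) (x : ℚ) (hx : x ≠ 0)
    (h1 : 1 ≤ padicValRat p x) (h2 : padicValRat p x ≤ (p : ℤ) - 1) :
    (Dp p)^[(padicValRat p x).toNat + 1] x = 0 :=
  dp_iter_eventually_zero_general p hp x h1 h2
end

section
/- The sequence ν_p(x), ν_p(D_p(x)), ν_p(D_p²(x)), ... is eventually +∞ (i.e., some iterate of D_p applied to x is 0) if and only if ν_p(x) ∈ {0, 1, ..., p-1} or x = 0. -/
open Set

variable {p : ℕ}

lemma padicValInt_lt_natAbs {z : ℤ} (hz : z ≠ 0) : padicValInt p z < z.natAbs :=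
  (padicValNat_le_nat_log _).trans_lt (Nat.log_lt_self p (Int.natAbs_ne_zero.mpr hz))

lemma padicValInt_eq_zero_of_pos_of_lt {z : ℤ} (h0 : 0 < z) (hz : z < p) :
    padicValInt p z = 0 :=
  padicValInt.eq_zero_of_not_dvd fun hdvd => (Int.le_of_dvd h0 hdvd).not_gt hz

lemma lt_add_padicValInt_of_le (hp : p.Prime) {z : ℤ} (hz : (p : ℤ) ≤ z) :
    (p : ℤ) < z + padicValInt p z := by
  by_cases hdvd : (p : ℤ) ∣ z
  · have := Fact.mk hp
    have : 1 ≤ padicValInt p z :=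
      ((padicValInt_dvd_iff 1 z).mp (by rwa [pow_one])).resolve_left
        (by linarith [hp.pos])
    omega
  · have : z ≠ p := fun h => hdvd (h ▸ dvd_rfl)
    omega

variable {x : ℚ}

lemma Dp_of_padicValRat_eq_zero (h : padicValRat p x = 0) : Dp p x = 0 := by
  simp [Dp, h]

lemma padicValRat_Dp (hp : p.Prime) (h : padicValRat p x ≠ 0) :
    padicValRat p (Dp p x) = padicValRat p x + padicValInt p (padicValRat p x) - 1 := by
  have := Fact.mk hp
  have hx : x ≠ 0 := fun hx => h (hx ▸ padicValRat.zero)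
  have hv : ((padicValRat p x : ℤ) : ℚ) ≠ 0 := by exact_mod_cast h
  have hp0 : (p : ℚ) ≠ 0 := by exact_mod_cast hp.ne_zero
  rw [Dp, if_neg hx, padicValRat.div (mul_ne_zero hx hv) hp0, padicValRat.mul hx hv,
    padicValRat.self hp.one_lt, padicValRat.of_int]

lemma mapsTo_Dp_padicValRat_neg (hp : p.Prime) :
    MapsTo (Dp p) {x | padicValRat p x < 0} {x | padicValRat p x < 0} := by
  intro x (hx : padicValRat p x < 0)
  have := padicValInt_lt_natAbs (p := p) hx.ne
  show padicValRat p (Dp p x) < 0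
  rw [padicValRat_Dp hp hx.ne]
  omega

lemma mapsTo_Dp_le_padicValRat (hp : p.Prime) :
    MapsTo (Dp p) {x | (p : ℤ) ≤ padicValRat p x} {x | (p : ℤ) ≤ padicValRat p x} := by
  intro x (hx : (p : ℤ) ≤ padicValRat p x)
  have := lt_add_padicValInt_of_le hp hx
  show (p : ℤ) ≤ padicValRat p (Dp p x)
  rw [padicValRat_Dp hp (by linarith [hp.pos])]
  omega

lemma iterate_Dp_eq_zero (hp : p.Prime) {k : ℕ} (hk : k < p) (hx : padicValRat p x = k) :
    (Dp p)^[k + 1] x = 0 := by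
  induction k generalizing x with
  | zero => exact Dp_of_padicValRat_eq_zero hx
  | succ k ih =>
    have hv : padicValInt p (padicValRat p x) = 0 :=
      padicValInt_eq_zero_of_pos_of_lt (by omega) (by omega)
    rw [Function.iterate_succ_apply]
    exact ih (by omega) (by rw [padicValRat_Dp hp (by omega), hv, hx]; push_cast; ring)

theorem dp_eventually_zero_iff (p : ℕ) (hp : p.Prime) (x : ℚ) :
    (∃ n : ℕ, (Dp p)^[n] x = 0) ↔
      (x = 0 ∨ (0 ≤ padicValRat p x ∧ padicValRat p x ≤ (p : ℤ) - 1)) := by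
  constructor
  · rintro ⟨n, hn⟩
    by_contra! h
    rcases lt_or_ge (padicValRat p x) 0 with hneg | hnonneg
    · have := (mapsTo_Dp_padicValRat_neg hp).iterate n hneg
      simp [hn] at this
    · have hge : (p : ℤ) ≤ padicValRat p x := by linarith [h.2 hnonneg]
      have := (mapsTo_Dp_le_padicValRat hp).iterate n hge
      exact hp.ne_zero (by simpa [hn] using this)
  · rintro (rfl | ⟨h0, h1⟩)
    · exact ⟨0, rfl⟩
    · obtain ⟨k, hk⟩ := Int.eq_ofNat_of_zero_le h0
      exact ⟨k + 1, iterate_Dp_eq_zero hp (by omega) hk⟩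
end

section
/- Let x be a nonzero rational number with ν_p(x) = b·p^k where p ∤ b and 1 ≤ k ≤ p. Then the sequence (ν_p(D_p^n(x)))_{n≥0} is periodic of period k: for all n ≥ 0, ν_p(D_p^{n+k}(x)) = ν_p(D_p^n(x)). -/
def valStep (p : ℕ) (v : ℤ) : ℤ := v + padicValInt p v - 1

section

variable {p : ℕ}

lemma padicValRat_Dp_s6 [Fact p.Prime] {x : ℚ} (hx : padicValRat p x ≠ 0) :
    padicValRat p (Dp p x) = valStep p (padicValRat p x) := by
  have hx0 : x ≠ 0 := by rintro rfl; exact hx padicValRat.zero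
  have hv : ((padicValRat p x : ℤ) : ℚ) ≠ 0 := by exact_mod_cast hx
  have hp : (p : ℚ) ≠ 0 := by exact_mod_cast (Fact.out : p.Prime).ne_zero
  rw [Dp, if_neg hx0, padicValRat.div (mul_ne_zero hx0 hv) hp, padicValRat.mul hx0 hv,
    padicValRat.self (Fact.out : p.Prime).one_lt, padicValRat.of_int, valStep]

lemma padicValRat_iterate_Dp [Fact p.Prime] {x : ℚ}
    (h : ∀ m, (valStep p)^[m] (padicValRat p x) ≠ 0) (n : ℕ) :
    padicValRat p ((Dp p)^[n] x) = (valStep p)^[n] (padicValRat p x) := by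
  induction n with
  | zero => rfl
  | succ n ih =>
    rw [Function.iterate_succ_apply', Function.iterate_succ_apply', ← ih,
      padicValRat_Dp_s6 (ih ▸ h n)]

lemma add_ne_zero_of_dvd_of_lt {w c : ℤ} (hw : w ≠ 0) (hpw : (p : ℤ) ∣ w) (hc0 : 0 ≤ c)
    (hcp : c < p) : w + c ≠ 0 := by
  intro hwc
  have hc : c = 0 := Int.eq_zero_of_dvd_of_nonneg_of_lt hc0 hcp
    (by rw [eq_neg_of_add_eq_zero_right hwc]; exact hpw.neg_right)
  exact hw (by simpa [hc] using hwc)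

lemma valStep_add_of_dvd {w c : ℤ} (hpw : (p : ℤ) ∣ w) (hc0 : 0 < c) (hcp : c < p) :
    valStep p (w + c) = w + c - 1 := by
  have hndvd : ¬ (p : ℤ) ∣ w + c := fun h =>
    absurd (Int.le_of_dvd hc0 ((Int.dvd_add_right hpw).mp h)) (not_le.mpr hcp)
  rw [valStep, padicValInt.eq_zero_of_not_dvd hndvd, Nat.cast_zero, add_zero]

lemma valStep_iterate_add_of_dvd {w : ℤ} (hpw : (p : ℤ) ∣ w) {c : ℕ} (hcp : c < p) {i : ℕ}
    (hi : i ≤ c) : (valStep p)^[i] (w + c) = w + c - i := by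
  induction i with
  | zero => simp
  | succ i ih =>
    rw [Function.iterate_succ_apply', ih (by omega), add_sub_assoc,
      valStep_add_of_dvd hpw (by omega) (by omega)]
    push_cast
    ring

lemma padicValInt_mul_pow_of_not_dvd [Fact p.Prime] {b : ℤ} (hb : ¬ (p : ℤ) ∣ b) (k : ℕ) :
    padicValInt p (b * (p : ℤ) ^ k) = k := by
  have hb0 : b ≠ 0 := by rintro rfl; exact hb (dvd_zero _)
  have hpk : ((p : ℤ) ^ k) = ((p ^ k : ℕ) : ℤ) := by push_cast; rfl
  have hp0 : (p : ℤ) ≠ 0 := by exact_mod_cast (Fact.out : p.Prime).ne_zero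
  rw [padicValInt.mul hb0 (pow_ne_zero _ hp0), padicValInt.eq_zero_of_not_dvd hb, hpk,
    padicValInt.of_nat, padicValNat.prime_pow, zero_add]

variable [Fact p.Prime] {b : ℤ} {k : ℕ}

lemma valStep_iterate_succ_mul_pow (hb : ¬ (p : ℤ) ∣ b) (hkp : k ≤ p) {i : ℕ} (hi : i < k) :
    (valStep p)^[i + 1] (b * (p : ℤ) ^ k) = b * (p : ℤ) ^ k + (k - 1 : ℕ) - i := by
  have hpw : (p : ℤ) ∣ b * (p : ℤ) ^ k := (dvd_pow_self _ (by omega)).mul_left b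
  have hstep : valStep p (b * (p : ℤ) ^ k) = b * (p : ℤ) ^ k + (k - 1 : ℕ) := by
    rw [valStep, padicValInt_mul_pow_of_not_dvd hb, Nat.cast_sub (by omega)]
    push_cast
    ring
  rw [Function.iterate_succ_apply, hstep, valStep_iterate_add_of_dvd hpw (by omega) (by omega)]

lemma isPeriodicPt_valStep_mul_pow (hb : ¬ (p : ℤ) ∣ b) (hk1 : 1 ≤ k) (hkp : k ≤ p) :
    Function.IsPeriodicPt (valStep p) k (b * (p : ℤ) ^ k) := by
  have h := valStep_iterate_succ_mul_pow hb hkp (i := k - 1) (by omega)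
  rwa [Nat.sub_add_cancel hk1, add_sub_cancel_right] at h

lemma valStep_iterate_mul_pow_ne_zero (hb : ¬ (p : ℤ) ∣ b) (hk1 : 1 ≤ k) (hkp : k ≤ p)
    (m : ℕ) : (valStep p)^[m] (b * (p : ℤ) ^ k) ≠ 0 := by
  have hp0 : (p : ℤ) ≠ 0 := by exact_mod_cast (Fact.out : p.Prime).ne_zero
  have hw : b * (p : ℤ) ^ k ≠ 0 :=
    mul_ne_zero (by rintro rfl; exact hb (dvd_zero _)) (pow_ne_zero _ hp0)
  have hpw : (p : ℤ) ∣ b * (p : ℤ) ^ k := (dvd_pow_self _ (by omega)).mul_left b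
  rw [← (isPeriodicPt_valStep_mul_pow hb hk1 hkp).iterate_mod_apply]
  obtain hm | ⟨i, hi⟩ : m % k = 0 ∨ ∃ i, m % k = i + 1 :=
    (m % k).eq_zero_or_eq_succ_pred.imp id fun h => ⟨_, h⟩
  · rwa [hm]
  · have hik : i < k := by have := Nat.mod_lt m (by omega : k > 0); omega
    rw [hi, valStep_iterate_succ_mul_pow hb hkp hik, add_sub_assoc]
    exact add_ne_zero_of_dvd_of_lt hw hpw (by omega) (by omega)

end

theorem dp_val_periodic_general (p : ℕ) (hp : p.Prime) (x : ℚ)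
    (b : ℤ) (k : ℕ) (hb : ¬ (p : ℤ) ∣ b) (hval : padicValRat p x = b * (p : ℤ) ^ k)
    (hk1 : 1 ≤ k) (hkp : k ≤ p) :
    ∀ n : ℕ, padicValRat p ((Dp p)^[n + k] x) = padicValRat p ((Dp p)^[n] x) := by
  have := Fact.mk hp
  have horbit : ∀ m, (valStep p)^[m] (padicValRat p x) ≠ 0 :=
    hval ▸ valStep_iterate_mul_pow_ne_zero hb hk1 hkp
  intro n
  rw [padicValRat_iterate_Dp horbit, padicValRat_iterate_Dp horbit, hval,
    Function.iterate_add_apply, (isPeriodicPt_valStep_mul_pow hb hk1 hkp).eq]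

theorem dp_val_periodic (p : ℕ) (hp : p.Prime) (x : ℚ) (hx : x ≠ 0)
    (b : ℤ) (k : ℕ) (hb : ¬ (p : ℤ) ∣ b) (hval : padicValRat p x = b * (p : ℤ) ^ k)
    (hk1 : 1 ≤ k) (hkp : k ≤ p) :
    ∀ n : ℕ, padicValRat p ((Dp p)^[n + k] x) = padicValRat p ((Dp p)^[n] x) :=
  dp_val_periodic_general p hp x b k hb hval hk1 hkp
end

section
/- The rational number p^(p-1) has no anti-partial derivative: there is no x ∈ ℚ with D_p(x) = p^(p-1). -/
theorem add_padicValInt_ne_self {p : ℕ} (hp : 1 < p) {n : ℤ} (hn : n ≠ 0) :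
    n + padicValInt p n ≠ p := by
  intro h
  set k := padicValInt p n
  rcases Nat.eq_zero_or_pos k with hk | hk
  · have hnp : n = p := by simpa [hk] using h
    have : padicValInt p p = 0 := hnp ▸ hk
    simp [padicValInt.self hp] at this
  · have hle : (p : ℤ) ^ k ≤ |n| :=
      Int.le_of_dvd (abs_pos.mpr hn) ((dvd_abs _ _).mpr (padicValInt_dvd n))
    have hk_lt : (k : ℤ) < (p : ℤ) ^ k := by exact_mod_cast Nat.lt_pow_self hp
    have hp_le : (p : ℤ) ≤ (p : ℤ) ^ k := by exact_mod_cast Nat.le_self_pow hk.ne' p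
    have : |n| < (p : ℤ) ^ k := by
      rw [abs_lt]
      constructor <;> omega
    omega

theorem mul_padicValRat_ne_pow_self {p : ℕ} [hp : Fact p.Prime] (x : ℚ) :
    x * padicValRat p x ≠ (p : ℚ) ^ p := by
  intro h
  set n := padicValRat p x
  have hpow : (p : ℚ) ^ p ≠ 0 := pow_ne_zero _ (Nat.cast_ne_zero.mpr hp.out.ne_zero)
  have hn : n ≠ 0 := by
    rintro hn
    simp only [hn, Int.cast_zero, mul_zero] at h
    exact hpow h.symm
  have hx : x = (p : ℚ) ^ p / n := by
    rw [← h]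
    field_simp
  have hval : n = p - padicValInt p n := by
    have := congrArg (padicValRat p) hx
    rwa [padicValRat.div hpow (Int.cast_ne_zero.mpr hn), padicValRat.pow,
      padicValRat.self hp.out.one_lt, mul_one, padicValRat.of_int] at this
  exact add_padicValInt_ne_self hp.out.one_lt hn (by omega)

theorem no_antiderivative_of_p_pow (p : ℕ) (hp : p.Prime) :
    ¬ ∃ x : ℚ, Dp p x = (p : ℚ) ^ (p - 1) := by
  have := Fact.mk hp
  rintro ⟨x, hx⟩
  have hp0 : (p : ℚ) ≠ 0 := Nat.cast_ne_zero.mpr hp.ne_zero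
  have hx0 : x ≠ 0 := by
    rintro rfl
    exact pow_ne_zero _ hp0 (by simpa [Dp] using hx.symm)
  apply mul_padicValRat_ne_pow_self (p := p) x
  rw [Dp, if_neg hx0, div_eq_iff hp0] at hx
  rw [hx, ← pow_succ, Nat.sub_add_cancel hp.one_le]
end

section
/- If x₁ and x₂ are nonzero rational numbers with nonzero p-adic valuations such that D_p(x₁) = D_p(x₂) and ν_p(ν_p(x₁)) = ν_p(ν_p(x₂)), then x₁ = x₂. -/
/-!
`D_p(x₁) = D_p(x₂)` means `x₁ ν(x₁) = x₂ ν(x₂)`. Taking valuations gives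
`ν(x₁) + ν(ν(x₁)) = ν(x₂) + ν(ν(x₂))`, so equal `ν(ν(xᵢ))` force `ν(x₁) = ν(x₂)`,
and this common nonzero factor cancels.
-/

theorem Dp_eq_mul_div (p : ℕ) (x : ℚ) : Dp p x = x * padicValRat p x / p := by
  unfold Dp
  split_ifs with hx <;> simp [hx]

theorem padicValRat_mul_padicValRat {p : ℕ} [Fact p.Prime] (x : ℚ) :
    padicValRat p (x * padicValRat p x) = padicValRat p x + padicValInt p (padicValRat p x) := by
  by_cases hv : padicValRat p x = 0
  · simp [hv]
  have hx : x ≠ 0 := by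
    rintro rfl
    exact hv padicValRat.zero
  rw [padicValRat.mul hx (Int.cast_ne_zero.mpr hv), padicValRat.of_int]

theorem dp_injective_of_same_k_general (p : ℕ) (hp : p.Prime) (x₁ x₂ : ℚ)
    (hv₁ : padicValRat p x₁ ≠ 0)
    (hD : Dp p x₁ = Dp p x₂)
    (hk : padicValInt p (padicValRat p x₁) = padicValInt p (padicValRat p x₂)) :
    x₁ = x₂ := by
  have : Fact p.Prime := ⟨hp⟩
  have hmul : x₁ * padicValRat p x₁ = x₂ * padicValRat p x₂ := by
    rwa [Dp_eq_mul_div, Dp_eq_mul_div, div_left_inj' (Nat.cast_ne_zero.mpr hp.ne_zero)] at hD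
  have hv : padicValRat p x₁ = padicValRat p x₂ := by
    have := congrArg (padicValRat p) hmul
    rw [padicValRat_mul_padicValRat, padicValRat_mul_padicValRat, hk] at this
    omega
  rw [hv] at hmul hv₁
  exact mul_right_cancel₀ (Int.cast_ne_zero.mpr hv₁) hmul

theorem dp_injective_of_same_k (p : ℕ) (hp : p.Prime) (x₁ x₂ : ℚ)
    (hx₁ : x₁ ≠ 0) (hx₂ : x₂ ≠ 0)
    (hv₁ : padicValRat p x₁ ≠ 0) (hv₂ : padicValRat p x₂ ≠ 0)
    (hD : Dp p x₁ = Dp p x₂)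
    (hk : padicValInt p (padicValRat p x₁) = padicValInt p (padicValRat p x₂)) :
    x₁ = x₂ :=
  dp_injective_of_same_k_general p hp x₁ x₂ hv₁ hD hk
end

section
/- Fix a positive integer k and define c₁ = 0 and c_{i+1} = p^{p^k · c_i} + c_i for i ≥ 1. Then for all 1 ≤ i < j, ν_p(c_j - c_i) = p^k · c_i. -/
/-!
The difference `c j - c i` telescopes to `∑_{i ≤ n < j} p ^ (p ^ k * c n)`. The sequence `c`
is strictly increasing, so the exponents are too, and the first term `p ^ (p ^ k * c i)`
alone determines the `p`-adic valuation: the remaining terms are divisible by `p ^ (p ^ k * c i + 1)`.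
-/

open Finset

theorem padicValInt_pow_add_of_dvd {p : ℕ} [hp : Fact p.Prime] {n : ℕ} {b : ℤ}
    (hb : (p : ℤ) ^ (n + 1) ∣ b) : padicValInt p ((p : ℤ) ^ n + b) = n := by
  obtain ⟨m, rfl⟩ := hb
  have hunit : ¬ (p : ℤ) ∣ 1 + p * m := by
    rw [dvd_add_left (dvd_mul_right _ m)]
    exact Int.natCast_dvd_ofNat.not.mpr hp.out.not_dvd_one
  have hne : (1 : ℤ) + p * m ≠ 0 := fun h => hunit (h ▸ dvd_zero _)
  calc padicValInt p ((p : ℤ) ^ n + p ^ (n + 1) * m)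
      = padicValInt p ((p : ℤ) ^ n * (1 + p * m)) := by ring_nf
    _ = n := by
      rw [padicValInt.mul (pow_ne_zero _ (by exact_mod_cast hp.out.ne_zero)) hne,
        padicValInt.eq_zero_of_not_dvd hunit, ← Nat.cast_pow, padicValInt.of_nat,
        padicValNat.prime_pow, add_zero]

theorem padicValInt_sum_Ico_pow {p : ℕ} [Fact p.Prime] {f : ℕ → ℕ} {i j : ℕ}
    (hf : StrictMonoOn f (Set.Ico i j)) (hij : i < j) :
    padicValInt p (∑ n ∈ Ico i j, (p : ℤ) ^ f n) = f i := by
  rw [sum_eq_sum_Ico_succ_bot hij]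
  refine padicValInt_pow_add_of_dvd (dvd_sum fun n hn => pow_dvd_pow _ ?_)
  obtain ⟨hin, hnj⟩ := mem_Ico.mp hn
  exact hf (Set.left_mem_Ico.mpr hij) ⟨by omega, hnj⟩ (by omega)

theorem strictMonoOn_Ici_of_eq_pow_add {p : ℕ} (hp : 0 < p) {e c : ℕ → ℕ} {i₀ : ℕ}
    (hrec : ∀ i, i₀ ≤ i → c (i + 1) = p ^ e i + c i) : StrictMonoOn c (Set.Ici i₀) :=
  strictMonoOn_of_lt_succ Set.ordConnected_Ici fun i _ hi _ => by
    rw [Order.succ_eq_add_one, hrec i hi]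
    have := pow_pos hp (e i)
    omega

theorem padicVal_c_sub_general (p : ℕ) (hp : p.Prime) (k : ℕ)
    (c : ℕ → ℕ)
    (hrec : ∀ i, 1 ≤ i → c (i + 1) = p ^ (p ^ k * c i) + c i) :
    ∀ i j, 1 ≤ i → i < j → padicValInt p ((c j : ℤ) - (c i : ℤ)) = p ^ k * c i := by
  have : Fact p.Prime := ⟨hp⟩
  intro i j hi hij
  have hc : StrictMonoOn c (Set.Ici 1) := strictMonoOn_Ici_of_eq_pow_add hp.pos hrec
  have hexp : StrictMonoOn (fun n => p ^ k * c n) (Set.Ico i j) := fun a ha b hb hab =>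
    Nat.mul_lt_mul_of_pos_left (hc (hi.trans ha.1) (hi.trans hb.1) hab) (pow_pos hp.pos k)
  have htelescope : (c j : ℤ) - c i = ∑ n ∈ Ico i j, (p : ℤ) ^ (p ^ k * c n) := by
    rw [← sum_Ico_sub (fun n => (c n : ℤ)) hij.le]
    refine sum_congr rfl fun n hn => ?_
    rw [hrec n (hi.trans (mem_Ico.mp hn).1)]
    push_cast
    ring
  rw [htelescope, padicValInt_sum_Ico_pow hexp hij]

theorem padicVal_c_sub (p : ℕ) (hp : p.Prime) (k : ℕ) (hk : 1 ≤ k)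
    (c : ℕ → ℕ) (hc1 : c 1 = 0)
    (hrec : ∀ i, 1 ≤ i → c (i + 1) = p ^ (p ^ k * c i) + c i) :
    ∀ i j, 1 ≤ i → i < j → padicValInt p ((c j : ℤ) - (c i : ℤ)) = p ^ k * c i :=
  padicVal_c_sub_general p hp k c hrec
end

section
/- Fix a positive integer k, let c₁ = 0 and c_{i+1} = p^{p^k·c_i} + c_i, and fix n ≥ 1. Then the set C_n = {c ∈ ℤ, c > 0 : ν_p(c_{n+1} - c) = p^k·c} equals {c₂, c₃, ..., c_n}; in particular C_n has exactly n-1 elements. -/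
/-!
Put `a = p ^ k * c j`. Since the increments `p ^ (p ^ k * c i)` for `i > j` are divisible by
`p ^ (a + 1)`, we get `c i ≡ c j + p ^ a [ZMOD p ^ (a + 1)]` for `1 ≤ j < i`, hence
`ν_p (c (n + 1) - c j) = p ^ k * c j` for `j ≤ n`.

Conversely let `m > 0` with `p ^ (p ^ k * m) ∣ c (n + 1) - m ≠ 0`. Then `m < c (n + 1)`, because
`m < p ^ m`. Choose `j ≤ n` with `c j ≤ m < c (j + 1)`. If `c j < m`, then `p ^ (a + 1)` divides both
`c (n + 1) - m` and `c (n + 1) - c (j + 1)`, hence also `c (j + 1) - m`. That is impossible, since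
`0 < c (j + 1) - m ≤ p ^ a`. So `m = c j`, and `j ≥ 2` because `c 1 = 0`.
-/

theorem Nat.exists_le_lt_succ_of_le_of_lt {β : Type*} [LinearOrder β] {f : ℕ → β} {a b : ℕ}
    {x : β} (hab : a ≤ b) (ha : f a ≤ x) (hb : x < f b) :
    ∃ j, a ≤ j ∧ j < b ∧ f j ≤ x ∧ x < f (j + 1) := by
  induction b, hab using Nat.le_induction with
  | base => exact absurd hb (not_lt.2 ha)
  | succ b hab ih =>
    by_cases hx : x < f b
    · obtain ⟨j, haj, hjb, hj⟩ := ih hx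
      exact ⟨j, haj, hjb.trans b.lt_succ_self, hj⟩
    · exact ⟨b, hab, b.lt_succ_self, not_lt.1 hx, hb⟩

theorem lt_of_pow_dvd_sub {p a m : ℕ} (hp : 2 ≤ p) (h : (p : ℤ) ^ m ∣ a - m) (hne : a ≠ m) :
    m < a := by
  by_contra! hle
  have hsmall : |(a : ℤ) - m| < (p : ℤ) ^ m := by
    rw [abs_sub_comm, abs_of_nonneg (by omega)]
    have : (m : ℤ) < (p : ℤ) ^ m := by exact_mod_cast Nat.lt_pow_self hp
    linarith
  exact hne (by exact_mod_cast sub_eq_zero.1 (Int.eq_zero_of_abs_lt_dvd h hsmall))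

theorem padicValInt_eq_of_dvd_of_not_dvd {p : ℕ} [Fact p.Prime] {x : ℤ} {a : ℕ}
    (h : (p : ℤ) ^ a ∣ x) (hsucc : ¬(p : ℤ) ^ (a + 1) ∣ x) : padicValInt p x = a := by
  have hx : x ≠ 0 := by rintro rfl; exact hsucc (dvd_zero _)
  refine le_antisymm ?_ (((padicValInt_dvd_iff a x).1 h).resolve_left hx)
  by_contra! hlt
  exact hsucc ((padicValInt_dvd_iff (a + 1) x).2 (Or.inr hlt))

def IsSelfPowSeq (p k : ℕ) (c : ℕ → ℕ) : Prop :=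
  ∀ i, 1 ≤ i → c (i + 1) = p ^ (p ^ k * c i) + c i

namespace IsSelfPowSeq

variable {p k : ℕ} {c : ℕ → ℕ}

theorem strictMonoOn (hc : IsSelfPowSeq p k c) (hp : 0 < p) : StrictMonoOn c (Set.Ici 1) :=
  strictMonoOn_of_lt_add_one Set.ordConnected_Ici fun i _ hi _ => by
    rw [hc i hi]
    have := pow_pos hp (p ^ k * c i)
    omega

theorem pow_dvd_sub (hc : IsSelfPowSeq p k c) (hp : 0 < p) {i j : ℕ} (hj : 1 ≤ j)
    (hji : j ≤ i) : (p : ℤ) ^ (p ^ k * c j) ∣ c i - c j := by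
  induction i, hji using Nat.le_induction with
  | base => simp
  | succ i hji ih =>
    have hle : c j ≤ c i := (hc.strictMonoOn hp).monotoneOn hj (hj.trans hji) hji
    rw [hc i (hj.trans hji), Nat.cast_add, add_sub_assoc, Nat.cast_pow]
    exact dvd_add (pow_dvd_pow _ (Nat.mul_le_mul_left _ hle)) ih

theorem pow_succ_dvd_sub_sub (hc : IsSelfPowSeq p k c) (hp : 0 < p) {i j : ℕ} (hj : 1 ≤ j)
    (hji : j < i) : (p : ℤ) ^ (p ^ k * c j + 1) ∣ c i - c j - p ^ (p ^ k * c j) := by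
  induction i, hji using Nat.le_induction with
  | base => simp [hc j hj]
  | succ i hji ih =>
    have hlt : c j < c i := hc.strictMonoOn hp hj (show 1 ≤ i by omega) hji
    have hexp : p ^ k * c j + 1 ≤ p ^ k * c i := (Nat.mul_lt_mul_left (pow_pos hp k)).2 hlt
    rw [hc i (by omega), Nat.cast_add, Nat.cast_pow, add_sub_assoc, add_sub_assoc]
    exact dvd_add (pow_dvd_pow _ hexp) ih

theorem padicValInt_sub (hc : IsSelfPowSeq p k c) (hp : p.Prime) {i j : ℕ} (hj : 1 ≤ j)
    (hji : j < i) : padicValInt p (c i - c j) = p ^ k * c j := by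
  have := Fact.mk hp
  refine padicValInt_eq_of_dvd_of_not_dvd (hc.pow_dvd_sub hp.pos hj hji.le) fun h => ?_
  have hdvd := dvd_sub h (hc.pow_succ_dvd_sub_sub hp.pos hj hji)
  rw [sub_sub_cancel] at hdvd
  have hpZ := Nat.prime_iff_prime_int.mp hp
  exact absurd ((pow_dvd_pow_iff hpZ.ne_zero hpZ.not_isUnit).1 hdvd) (by omega)

theorem eq_of_le_of_lt_succ (hc : IsSelfPowSeq p k c) (hp : 2 ≤ p) {j n m : ℕ} (hj : 1 ≤ j)
    (hjn : j ≤ n) (hlo : c j ≤ m) (hhi : m < c (j + 1))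
    (hdvd : (p : ℤ) ^ (p ^ k * m) ∣ c (n + 1) - m) : c j = m := by
  by_contra hne
  have hpk : 0 < p ^ k := pow_pos (by omega) k
  set e := p ^ k * c j + 1
  have hem : e ≤ p ^ k * m := (Nat.mul_lt_mul_left hpk).2 (lt_of_le_of_ne hlo hne)
  have hej : e ≤ p ^ k * c (j + 1) :=
    (Nat.mul_lt_mul_left hpk).2 (hc.strictMonoOn (by omega) hj (by simp) j.lt_succ_self)
  have htail : (p : ℤ) ^ e ∣ c (n + 1) - c (j + 1) :=
    (pow_dvd_pow _ hej).trans (hc.pow_dvd_sub (by omega) (by omega) (by omega))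
  have hdvd' : (p : ℤ) ^ e ∣ c (j + 1) - m := by
    simpa using dvd_sub ((pow_dvd_pow _ hem).trans hdvd) htail
  have hsmall : |((c (j + 1) : ℤ) - m)| < (p : ℤ) ^ e := by
    have hstep : (p : ℤ) ^ (p ^ k * c j) < (p : ℤ) ^ e :=
      pow_lt_pow_right₀ (by exact_mod_cast hp) (by omega)
    rw [abs_of_nonneg (by omega)]
    push_cast [hc j hj]
    omega
  have := Int.eq_zero_of_abs_lt_dvd hdvd' hsmall
  omega

theorem exists_eq_of_pow_dvd_sub (hc : IsSelfPowSeq p k c) (hp : 2 ≤ p) (hc1 : c 1 = 0)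
    {n m : ℕ} (hm : 0 < m) (hdvd : (p : ℤ) ^ (p ^ k * m) ∣ c (n + 1) - m)
    (hne : c (n + 1) ≠ m) : ∃ j, (2 ≤ j ∧ j ≤ n) ∧ c j = m := by
  have hm_le : m ≤ p ^ k * m := Nat.le_mul_of_pos_left m (pow_pos (by omega) k)
  have hlt : m < c (n + 1) := lt_of_pow_dvd_sub hp ((pow_dvd_pow _ hm_le).trans hdvd) hne
  obtain ⟨j, hj, hjn, hlo, hhi⟩ :=
    Nat.exists_le_lt_succ_of_le_of_lt (by omega : 1 ≤ n + 1) (hc1 ▸ hm.le) hlt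
  have hcj := hc.eq_of_le_of_lt_succ hp hj (by omega) hlo hhi hdvd
  refine ⟨j, ⟨?_, by omega⟩, hcj⟩
  by_contra! hj1
  obtain rfl : j = 1 := by omega
  omega

end IsSelfPowSeq

theorem antideriv_count_set_general (p : ℕ) (hp : p.Prime) (k : ℕ)
    (n : ℕ)
    (c : ℕ → ℕ) (hc1 : c 1 = 0)
    (hrec : ∀ i, 1 ≤ i → c (i + 1) = p ^ (p ^ k * c i) + c i) :
    {m : ℕ | 0 < m ∧ padicValInt p ((c (n + 1) : ℤ) - (m : ℤ)) = p ^ k * m}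
        = c '' {i : ℕ | 2 ≤ i ∧ i ≤ n} ∧
    {m : ℕ | 0 < m ∧ padicValInt p ((c (n + 1) : ℤ) - (m : ℤ)) = p ^ k * m}.ncard
        = n - 1 := by
  have hc : IsSelfPowSeq p k c := hrec
  have hmono := hc.strictMonoOn hp.pos
  have hset : {m : ℕ | 0 < m ∧ padicValInt p ((c (n + 1) : ℤ) - (m : ℤ)) = p ^ k * m}
      = c '' {i : ℕ | 2 ≤ i ∧ i ≤ n} := by
    ext m
    constructor
    · rintro ⟨hm, hv⟩
      have hne : c (n + 1) ≠ m := by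
        rintro rfl
        simp [hp.ne_zero] at hv
        omega
      exact hc.exists_eq_of_pow_dvd_sub hp.two_le hc1 hm (hv ▸ padicValInt_dvd _) hne
    · rintro ⟨j, ⟨hj, hjn⟩, rfl⟩
      exact ⟨hc1 ▸ hmono Set.self_mem_Ici (show 1 ≤ j by omega) (by omega),
        hc.padicValInt_sub hp (by omega) (by omega)⟩
  refine ⟨hset, ?_⟩
  rw [hset, (hmono.injOn.mono fun i hi => by simp at hi ⊢; omega).ncard_image]
  change (Set.Icc 2 n).ncard = n - 1
  rw [← Finset.coe_Icc, Set.ncard_coe_finset, Nat.card_Icc]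
  omega

theorem antideriv_count_set (p : ℕ) (hp : p.Prime) (k : ℕ) (hk : 1 ≤ k)
    (n : ℕ) (hn : 1 ≤ n)
    (c : ℕ → ℕ) (hc1 : c 1 = 0)
    (hrec : ∀ i, 1 ≤ i → c (i + 1) = p ^ (p ^ k * c i) + c i) :
    {m : ℕ | 0 < m ∧ padicValInt p ((c (n + 1) : ℤ) - (m : ℤ)) = p ^ k * m}
        = c '' {i : ℕ | 2 ≤ i ∧ i ≤ n} ∧
    {m : ℕ | 0 < m ∧ padicValInt p ((c (n + 1) : ℤ) - (m : ℤ)) = p ^ k * m}.ncard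
        = n - 1 :=
  antideriv_count_set_general p hp k n c hc1 hrec
end

section
/- The arithmetic partial derivative D_p : ℚ → ℚ is continuous at every point of ℚ with respect to the p-adic absolute value. -/
theorem Dp_eq (p : ℕ) (x : ℚ) : Dp p x = x * (padicValRat p x : ℚ) / p := by
  by_cases hx : x = 0 <;> simp [Dp, hx]

theorem Dp_zero (p : ℕ) : Dp p 0 = 0 := if_pos rfl

section

variable {p : ℕ} [Fact p.Prime]

theorem padicNorm_mul_intCast_div_le (z : ℚ) (v : ℤ) :
    padicNorm p (z * v / p) ≤ p * padicNorm p z := by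
  have hp : (0 : ℚ) < p := mod_cast (Fact.out : p.Prime).pos
  rw [padicNorm.div, padicNorm.mul, padicNorm.padicNorm_p_of_prime, div_inv_eq_mul, mul_comm]
  gcongr
  exact mul_le_of_le_one_right (padicNorm.nonneg z) (padicNorm.of_int v)

theorem padicNorm_eq_of_padicNorm_sub_lt {x y : ℚ} (h : padicNorm p (y - x) < padicNorm p x) :
    padicNorm p y = padicNorm p x := by
  rw [← sub_add_cancel y x, padicNorm.add_eq_max_of_ne h.ne, max_eq_right h.le]

theorem padicValRat_eq_of_padicNorm_sub_lt {x y : ℚ} (hx : x ≠ 0)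
    (h : padicNorm p (y - x) < padicNorm p x) : padicValRat p y = padicValRat p x := by
  have hnorm := padicNorm_eq_of_padicNorm_sub_lt h
  have hy : y ≠ 0 := by
    rintro rfl
    exact padicNorm.nonzero hx (by rw [← hnorm, padicNorm.zero])
  have hp : (1 : ℚ) < p := mod_cast (Fact.out : p.Prime).one_lt
  rw [padicNorm.eq_zpow_of_nonzero hy, padicNorm.eq_zpow_of_nonzero hx] at hnorm
  exact neg_injective (zpow_right_injective₀ (by positivity) hp.ne' hnorm)

theorem padicNorm_Dp_le (y : ℚ) : padicNorm p (Dp p y) ≤ p * padicNorm p y := by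
  rw [Dp_eq]
  exact padicNorm_mul_intCast_div_le y _

theorem padicNorm_Dp_sub_le_of_padicValRat_eq {x y : ℚ}
    (h : padicValRat p y = padicValRat p x) :
    padicNorm p (Dp p y - Dp p x) ≤ p * padicNorm p (y - x) := by
  rw [Dp_eq, Dp_eq, h, ← sub_div, ← sub_mul]
  exact padicNorm_mul_intCast_div_le (y - x) _

theorem exists_padicNorm_Dp_sub_le (x : ℚ) :
    ∃ r > 0, ∀ y, padicNorm p (y - x) < r →
      padicNorm p (Dp p y - Dp p x) ≤ p * padicNorm p (y - x) := by
  by_cases hx : x = 0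
  · subst hx
    refine ⟨1, one_pos, fun y _ => ?_⟩
    simpa only [Dp_zero, sub_zero] using padicNorm_Dp_le y
  · exact ⟨padicNorm p x, (padicNorm.nonneg x).lt_of_ne' (padicNorm.nonzero hx), fun y hy =>
      padicNorm_Dp_sub_le_of_padicValRat_eq (padicValRat_eq_of_padicNorm_sub_lt hx hy)⟩

end

theorem dp_padic_continuous (p : ℕ) (hp : p.Prime) (x : ℚ) :
    ∀ ε : ℚ, 0 < ε → ∃ δ : ℚ, 0 < δ ∧
      ∀ y : ℚ, padicNorm p (y - x) < δ → padicNorm p (Dp p y - Dp p x) < ε := by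
  have : Fact p.Prime := ⟨hp⟩
  have hp0 : (0 : ℚ) < p := mod_cast hp.pos
  intro ε hε
  obtain ⟨r, hr, hlip⟩ := exists_padicNorm_Dp_sub_le (p := p) x
  refine ⟨min r (ε / p), lt_min hr (div_pos hε hp0), fun y hy => ?_⟩
  calc padicNorm p (Dp p y - Dp p x) ≤ p * padicNorm p (y - x) :=
        hlip y (hy.trans_le (min_le_left _ _))
    _ < p * (ε / p) := mul_lt_mul_of_pos_left (hy.trans_le (min_le_right _ _)) hp0
    _ = ε := mul_div_cancel₀ ε hp0.ne'
end

section
/- The arithmetic partial derivative D_p : ℚ → ℚ is not strictly differentiable at 0 with respect to the p-adic absolute value: the difference quotients Φ(u,v) = (D_p(u) - D_p(v))/(u - v) do not tend to a limit as (u,v) → (0,0) with u ≠ v. Concretely, with u_i = p^{i+1}, v_i = p^i, the quotient Φ(u_i, v_i) = ((i+1)p - i)/(p² - p) has p-adic valuation -1 when p ∤ i and ≥ 0 when p | i, so Φ(u_i, v_i) has no p-adic limit. -/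
noncomputable def dpSlope (p : ℕ) (u v : ℚ) : ℚ :=
  (Dp p u - Dp p v) / (u - v)

section

variable {p : ℕ} [hp : Fact p.Prime]

lemma padicNorm_sub_lt_one_of_lt_one {a b L : ℚ} (ha : padicNorm p (a - L) < 1)
    (hb : padicNorm p (b - L) < 1) : padicNorm p (a - b) < 1 := by
  rw [← sub_sub_sub_cancel_right a b L]
  exact padicNorm.sub.trans_lt (max_lt ha hb)

lemma padicNorm_natCast_pow (k : ℕ) : padicNorm p ((p : ℚ) ^ k) = (p : ℚ)⁻¹ ^ k := by
  rw [IsAbsoluteValue.abv_pow (padicNorm p), padicNorm.padicNorm_p_of_prime]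

lemma exists_forall_padicNorm_natCast_pow_lt {δ : ℚ} (hδ : 0 < δ) :
    ∃ n : ℕ, ∀ k ≥ n, padicNorm p ((p : ℚ) ^ k) < δ := by
  have hp_inv_lt_one : (p : ℚ)⁻¹ < 1 := inv_lt_one_of_one_lt₀ (by exact_mod_cast hp.out.one_lt)
  obtain ⟨n, hn⟩ := exists_pow_lt_of_lt_one hδ hp_inv_lt_one
  refine ⟨n, fun k hk => ?_⟩
  rw [padicNorm_natCast_pow]
  exact (pow_le_pow_of_le_one (by positivity) hp_inv_lt_one.le hk).trans_lt hn

lemma Dp_natCast_pow (k : ℕ) : Dp p ((p : ℚ) ^ k) = k * (p : ℚ) ^ k / p := by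
  have hp0 : (p : ℚ) ≠ 0 := Nat.cast_ne_zero.mpr hp.out.ne_zero
  rw [Dp, if_neg (pow_ne_zero _ hp0), padicValRat.pow, padicValRat.self hp.out.one_lt]
  push_cast
  ring

lemma dpSlope_natCast_pow_succ (i : ℕ) :
    dpSlope p ((p : ℚ) ^ (i + 1)) ((p : ℚ) ^ i) = ((i + 1) * p - i) / (p * (p - 1)) := by
  have hp0 : (p : ℚ) ≠ 0 := Nat.cast_ne_zero.mpr hp.out.ne_zero
  have hp1 : (p : ℚ) - 1 ≠ 0 := sub_ne_zero.mpr (by exact_mod_cast hp.out.one_lt.ne')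
  have hden : (p : ℚ) ^ (i + 1) - (p : ℚ) ^ i = (p : ℚ) ^ i * (p - 1) := by ring
  rw [dpSlope, Dp_natCast_pow, Dp_natCast_pow, hden]
  field_simp
  push_cast
  ring

lemma dpSlope_natCast_pow_succ_sub (i : ℕ) :
    dpSlope p ((p : ℚ) ^ (i + 2)) ((p : ℚ) ^ (i + 1)) - dpSlope p ((p : ℚ) ^ (i + 1)) ((p : ℚ) ^ i)
      = (p : ℚ)⁻¹ := by
  have hp0 : (p : ℚ) ≠ 0 := Nat.cast_ne_zero.mpr hp.out.ne_zero
  have hp1 : (p : ℚ) - 1 ≠ 0 := sub_ne_zero.mpr (by exact_mod_cast hp.out.one_lt.ne')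
  rw [dpSlope_natCast_pow_succ, dpSlope_natCast_pow_succ]
  field_simp
  push_cast
  ring

end

theorem dp_not_strictly_differentiable_at_zero (p : ℕ) (hp : p.Prime) :
    ¬ ∃ L : ℚ, ∀ ε : ℚ, 0 < ε → ∃ δ : ℚ, 0 < δ ∧
      ∀ u v : ℚ, u ≠ v → padicNorm p u < δ → padicNorm p v < δ →
        padicNorm p ((Dp p u - Dp p v) / (u - v) - L) < ε := by
  have := Fact.mk hp
  rintro ⟨L, hL⟩
  obtain ⟨δ, hδ, hnear⟩ := hL 1 one_pos
  obtain ⟨n, hsmall⟩ := exists_forall_padicNorm_natCast_pow_lt (p := p) hδ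
  have hclose : ∀ i ≥ n, padicNorm p (dpSlope p ((p : ℚ) ^ (i + 1)) ((p : ℚ) ^ i) - L) < 1 :=
    fun i hi => hnear _ _ (pow_lt_pow_right₀ (by exact_mod_cast hp.one_lt) i.lt_succ_self).ne'
      (hsmall _ (by omega)) (hsmall _ hi)
  have hjump := padicNorm_sub_lt_one_of_lt_one (hclose (n + 1) (by omega)) (hclose n le_rfl)
  rw [dpSlope_natCast_pow_succ_sub, IsAbsoluteValue.abv_inv (padicNorm p), padicNorm.padicNorm_p_of_prime,
    inv_inv] at hjump
  exact absurd hjump (not_lt.mpr (by exact_mod_cast hp.one_lt.le))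
end

section
/- Let T be a set of primes containing a prime q ≠ p. Then the arithmetic subderivative D_T : ℚ → ℚ is p-adically discontinuous at every nonzero rational x. (It suffices to prove this for x = 1, or in general: there exists a sequence x_i → x p-adically with D_T(x_i) not converging p-adically to D_T(x).) -/
/-- The arithmetic subderivative with respect to a set `T` of primes. -/
noncomputable def DT (T : Set ℕ) (x : ℚ) : ℚ :=
  if x = 0 then 0 else x * ∑ᶠ q ∈ T, (padicValRat q x : ℚ) / q

/-!
Write `D_T(x) = x · L_T(x)` with the logarithmic subderivative `L_T(x) = ∑_{r ∈ T} ν_r(x)/r`,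
which is additive on `ℚˣ`, satisfies `|L_T(x)|_p ≤ p`, and takes the value `1/q + [s ∈ T]/s`
at `q s` for primes `q, s`. By Dirichlet's theorem there are primes `s` with `q s → 1`
`p`-adically; for `u = q s` we get `D_T(x u) - D_T(x) = x ((u - 1) L_T(x) + u L_T(u))`, where
the first term tends to `0` while `|L_T(u)|_p ≥ |q² + 1|_p > 0`, because
`q (q + s) = (q² + 1) + (q s - 1)`.
-/

noncomputable def logDT (T : Set ℕ) (x : ℚ) : ℚ :=
  ∑ᶠ r ∈ T, (padicValRat r x : ℚ) / r

theorem DT_eq_mul_logDT (T : Set ℕ) (x : ℚ) : DT T x = x * logDT T x := by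
  unfold DT
  split_ifs with hx
  · rw [hx, zero_mul]
  · rfl

theorem finite_support_padicValRat {x : ℚ} (hx : x ≠ 0) :
    (Function.support fun r : ℕ => padicValRat r x).Finite := by
  have le_of_padicValNat_ne_zero {r n : ℕ} (hn : n ≠ 0) (h : padicValNat r n ≠ 0) : r ≤ n :=
    Nat.le_of_dvd (Nat.pos_of_ne_zero hn)
      (by_contra fun hd => h (padicValNat.eq_zero_of_not_dvd hd))
  refine (Set.finite_Iic (x.num.natAbs + x.den)).subset fun r hr => ?_
  rw [Function.mem_support, padicValRat, padicValInt] at hr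
  rcases (sub_ne_zero.mp hr).ne_or_ne 0 with hnum | hden
  · exact le_add_right (le_of_padicValNat_ne_zero (n := x.num.natAbs) (by simpa using hx)
      (by exact_mod_cast hnum))
  · exact le_add_left (le_of_padicValNat_ne_zero x.den_ne_zero (by exact_mod_cast hden))

theorem exists_prime_padicNorm_mul_sub_one_lt {p q : ℕ} [Fact p.Prime] (hq : q.Coprime p)
    {η : ℚ} (hη : 0 < η) :
    ∃ s : ℕ, s.Prime ∧ s ≠ p ∧ padicNorm p (q * s - 1) < η := by
  have hp : (1 : ℚ) < p := by exact_mod_cast (Fact.out : p.Prime).one_lt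
  obtain ⟨n, hn⟩ := exists_pow_lt_of_lt_one hη (inv_lt_one_of_one_lt₀ hp)
  have : NeZero (p ^ n) := ⟨pow_ne_zero n (Fact.out : p.Prime).ne_zero⟩
  have hqu : IsUnit (q : ZMod (p ^ n)) :=
    (ZMod.isUnit_iff_coprime q (p ^ n)).mpr (hq.pow_right n)
  obtain ⟨s, hps, hs, hsq⟩ := Nat.forall_exists_prime_gt_and_eq_mod (hqu.unit⁻¹).isUnit p
  refine ⟨s, hs, hps.ne', ?_⟩
  have hdvd : ((p ^ n : ℕ) : ℤ) ∣ q * s - 1 := by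
    rw [← ZMod.intCast_zmod_eq_zero_iff_dvd]
    push_cast
    rw [hsq, hqu.mul_val_inv, sub_self]
  have hnorm := padicNorm.dvd_iff_norm_le.mp hdvd
  push_cast at hnorm
  rw [zpow_neg, zpow_natCast, ← inv_pow] at hnorm
  exact hnorm.trans_lt hn

section logDT

variable {T : Set ℕ}

theorem logDT_mul (hT : ∀ r ∈ T, r.Prime) {x y : ℚ} (hx : x ≠ 0) (hy : y ≠ 0) :
    logDT T (x * y) = logDT T x + logDT T y := by
  have hfin {z : ℚ} (hz : z ≠ 0) :
      (T ∩ Function.support fun r : ℕ => (padicValRat r z : ℚ) / r).Finite :=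
    ((finite_support_padicValRat hz).subset fun r hr => by simp_all).inter_of_right T
  rw [logDT, logDT, logDT, ← finsum_mem_add_distrib' (hfin hx) (hfin hy)]
  refine finsum_mem_congr rfl fun r hr => ?_
  have := Fact.mk (hT r hr)
  rw [padicValRat.mul hx hy, Int.cast_add, add_div]

theorem logDT_natCast_prime (hT : ∀ r ∈ T, r.Prime) {t : ℕ} (ht : t.Prime) :
    logDT T t = T.indicator (fun r => (r : ℚ)⁻¹) t := by
  have := Fact.mk ht
  rw [logDT, finsum_mem_def, finsum_eq_single _ t fun r hrt => ?_]
  · by_cases htT : t ∈ T <;> simp [htT]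
  by_cases hrT : r ∈ T
  · have := Fact.mk (hT r hrT)
    simp [hrT, padicValRat.of_nat, padicValNat_primes hrt]
  · exact Set.indicator_of_notMem hrT _

theorem DT_mul_sub_DT (hT : ∀ r ∈ T, r.Prime) {x u : ℚ} (hx : x ≠ 0) (hu : u ≠ 0) :
    DT T (x * u) - DT T x = x * ((u - 1) * logDT T x + u * logDT T u) := by
  rw [DT_eq_mul_logDT, DT_eq_mul_logDT, logDT_mul hT hx hu]
  ring

variable {p : ℕ} [Fact p.Prime]

theorem padicNorm_natCast_prime_of_ne {r : ℕ} (hr : r.Prime) (hrp : r ≠ p) :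
    padicNorm p r = 1 :=
  (padicNorm.nat_eq_one_iff r).mpr fun h =>
    hrp ((Nat.prime_dvd_prime_iff_eq Fact.out hr).mp h).symm

theorem padicNorm_add_eq_right {a b : ℚ} (h : padicNorm p a < padicNorm p b) :
    padicNorm p (a + b) = padicNorm p b := by
  rw [padicNorm.add_eq_max_of_ne h.ne, max_eq_right h.le]

theorem padicNorm_logDT_le (hT : ∀ r ∈ T, r.Prime) (x : ℚ) :
    padicNorm p (logDT T x) ≤ p := by
  have hp : (1 : ℚ) ≤ p := by exact_mod_cast (Fact.out : p.Prime).one_le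
  refine finsum_mem_induction (fun a => padicNorm p a ≤ p) (by simp)
    (fun a b ha hb => padicNorm.nonarchimedean.trans (max_le ha hb)) fun r hr => ?_
  rw [padicNorm.div]
  rcases eq_or_ne r p with rfl | hrp
  · rw [padicNorm.padicNorm_p_of_prime, div_inv_eq_mul]
    exact mul_le_of_le_one_left (by positivity) (padicNorm.of_int _)
  · rw [padicNorm_natCast_prime_of_ne (hT r hr) hrp, div_one]
    exact (padicNorm.of_int _).trans hp

theorem padicNorm_sq_add_one_le_logDT_mul (hT : ∀ r ∈ T, r.Prime) {q s : ℕ} (hqT : q ∈ T)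
    (hqp : q ≠ p) (hs : s.Prime) (hsp : s ≠ p)
    (hclose : padicNorm p (q * s - 1) < padicNorm p (q ^ 2 + 1)) :
    padicNorm p (q ^ 2 + 1) ≤ padicNorm p (logDT T (q * s)) := by
  have hq := hT q hqT
  have hq0 : (q : ℚ) ≠ 0 := by exact_mod_cast hq.ne_zero
  have hs0 : (s : ℚ) ≠ 0 := by exact_mod_cast hs.ne_zero
  have hqn := padicNorm_natCast_prime_of_ne hq hqp
  rw [logDT_mul hT hq0 hs0, logDT_natCast_prime hT hq, logDT_natCast_prime hT hs,
    Set.indicator_of_mem hqT]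
  by_cases hsT : s ∈ T
  · rw [Set.indicator_of_mem hsT]
    have hsum : (q : ℚ)⁻¹ + (s : ℚ)⁻¹ = ((q * s - 1) + (q ^ 2 + 1)) / (q ^ 2 * s) := by
      field_simp
      ring
    rw [hsum, padicNorm.div, padicNorm_add_eq_right hclose, sq, padicNorm.mul, padicNorm.mul,
      hqn, padicNorm_natCast_prime_of_ne hs hsp]
    simp
  · rw [Set.indicator_of_notMem hsT, add_zero, inv_eq_one_div, padicNorm.div, hqn,
      padicNorm.one, div_one]
    exact_mod_cast padicNorm.of_nat (q ^ 2 + 1)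

theorem padicNorm_mul_sq_add_one_le_DT_mul_sub (hT : ∀ r ∈ T, r.Prime) {q s : ℕ}
    (hqT : q ∈ T) (hqp : q ≠ p) (hs : s.Prime) (hsp : s ≠ p) {x : ℚ} (hx : x ≠ 0)
    (hclose : padicNorm p (q * s - 1) < padicNorm p (q ^ 2 + 1) / p) :
    padicNorm p x * padicNorm p (q ^ 2 + 1) ≤ padicNorm p (DT T (x * (q * s)) - DT T x) := by
  have hq := hT q hqT
  set c := padicNorm p ((q : ℚ) ^ 2 + 1)
  set u : ℚ := q * s
  have hp : (1 : ℚ) < p := by exact_mod_cast (Fact.out : p.Prime).one_lt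
  have hc : 0 < c := (padicNorm.nonneg _).lt_of_ne' (padicNorm.nonzero (by positivity))
  have hu : padicNorm p u = 1 := by
    rw [padicNorm.mul, padicNorm_natCast_prime_of_ne hq hqp, padicNorm_natCast_prime_of_ne hs hsp,
      one_mul]
  have hlogu : c ≤ padicNorm p (logDT T u) :=
    padicNorm_sq_add_one_le_logDT_mul hT hqT hqp hs hsp (hclose.trans (div_lt_self hc hp))
  have hsmall : padicNorm p ((u - 1) * logDT T x) < padicNorm p (u * logDT T u) := calc
    _ < c / p * p := by
      rw [padicNorm.mul]
      exact mul_lt_mul_of_lt_of_le_of_nonneg_of_pos hclose (padicNorm_logDT_le hT x)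
        (padicNorm.nonneg _) (zero_lt_one.trans hp)
    _ = c := div_mul_cancel₀ c (zero_lt_one.trans hp).ne'
    _ ≤ padicNorm p (u * logDT T u) := by rwa [padicNorm.mul, hu, one_mul]
  rw [DT_mul_sub_DT hT hx (fun h => by simp [h] at hu), padicNorm.mul,
    padicNorm_add_eq_right hsmall, padicNorm.mul, hu, one_mul]
  exact mul_le_mul_of_nonneg_left hlogu (padicNorm.nonneg x)

end logDT

theorem subderivative_discontinuous (p : ℕ) (hp : p.Prime) (T : Set ℕ)
    (hT : ∀ q ∈ T, Nat.Prime q) (q : ℕ) (hq : q ∈ T) (hqp : q ≠ p)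
    (x : ℚ) (hx : x ≠ 0) :
    ¬ (∀ ε : ℚ, 0 < ε → ∃ δ : ℚ, 0 < δ ∧
      ∀ y : ℚ, padicNorm p (y - x) < δ → padicNorm p (DT T y - DT T x) < ε) := by
  have := Fact.mk hp
  intro hcont
  set c := padicNorm p ((q : ℚ) ^ 2 + 1)
  have hc : 0 < c := (padicNorm.nonneg _).lt_of_ne' (padicNorm.nonzero (by positivity))
  have hxn : 0 < padicNorm p x := (padicNorm.nonneg _).lt_of_ne' (padicNorm.nonzero hx)
  have hp0 : (0 : ℚ) < p := by exact_mod_cast hp.pos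
  obtain ⟨δ, hδ, hδx⟩ := hcont (padicNorm p x * c) (by positivity)
  obtain ⟨s, hs, hsp, hclose⟩ := exists_prime_padicNorm_mul_sub_one_lt
    ((Nat.coprime_primes (hT q hq) hp).mpr hqp) (η := min (c / p) (δ / padicNorm p x))
    (by positivity)
  have hnear : padicNorm p (x * (q * s) - x) < δ := by
    rw [← mul_sub_one, padicNorm.mul, ← lt_div_iff₀' hxn]
    exact hclose.trans_le (min_le_right _ _)
  exact (hδx _ hnear).not_ge <| padicNorm_mul_sq_add_one_le_DT_mul_sub hT hq hqp hs hsp hx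
    (hclose.trans_le (min_le_left _ _))
end
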